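/- arXiv:2309.03916 — 2 statements merged into one kernel-verified Lean document; each statement's English description precedes it below -/
import Mathlib

section
/- For every polynomial p ∈ ℝ[X], E(X · p') = X · (E p)' − (E p)''. Equivalently, the operator e^{−D²/2} intertwines the Euler operator X·D with the Hermite differential operator 𝔻_H = X·D − D²: one has E ∘ (X·D) = 𝔻_H ∘ E. -/
/-!
`E = e^{-D²/2}` is a power series in `D`, so it commutes with `D`; and since `[D, X] = 1`,
commuting `X` past it differentiates the series: `E X = X E + (d/dD) e^{-D²/2} = X E - D E`.
It remains to apply this to `p'` and move `D` past `E`. On coefficients, `E X = X E - D E` is the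
recursion `2 (k + 1) c_{k+1} = -c_k` for `c_k = (-1)^k / (2^k k!)`.
-/

open Polynomial Finset

/-- The operator `e^{−D²/2}` on polynomials: the finite sum
`E p = Σ_{k=0}^{natDegree p} ((−1)^k / (2^k k!)) · p^{(2k)}`. -/
noncomputable def expNegHalfDSq (p : ℝ[X]) : ℝ[X] :=
  ∑ k ∈ range (p.natDegree + 1),
    ((-1 : ℝ) ^ k / (2 ^ k * (k.factorial : ℝ))) • (⇑derivative)^[2 * k] p

theorem Polynomial.iterate_derivative_X_mul {R : Type*} [CommSemiring R] (n : ℕ) (q : R[X]) :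
    derivative^[n] (X * q) = X * derivative^[n] q + n • derivative^[n - 1] q := by
  rw [mul_comm X, iterate_derivative_mul_X, mul_comm _ X]

noncomputable def expNegHalfDSqCoeff (k : ℕ) : ℝ :=
  (-1) ^ k / (2 ^ k * k.factorial)

lemma two_mul_succ_mul_expNegHalfDSqCoeff_succ (k : ℕ) :
    (2 * (k + 1) : ℝ) * expNegHalfDSqCoeff (k + 1) = -expNegHalfDSqCoeff k := by
  simp only [expNegHalfDSqCoeff, Nat.factorial_succ, pow_succ]
  push_cast
  field_simp

lemma expNegHalfDSq_eq_sum {p : ℝ[X]} {N : ℕ} (h : p.natDegree ≤ N) :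
    expNegHalfDSq p =
      ∑ k ∈ range (N + 1), expNegHalfDSqCoeff k • derivative^[2 * k] p := by
  refine sum_subset (range_subset_range.2 (by omega)) fun k _ hk => ?_
  rw [iterate_derivative_eq_zero (by simp at hk; omega), smul_zero]

lemma derivative_expNegHalfDSq (p : ℝ[X]) :
    derivative (expNegHalfDSq p) = expNegHalfDSq (derivative p) := by
  rw [expNegHalfDSq_eq_sum le_rfl,
    expNegHalfDSq_eq_sum ((natDegree_derivative_le p).trans (Nat.sub_le _ _)), map_sum]
  simp only [derivative_smul, ← Function.iterate_succ_apply' derivative,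
    Function.iterate_succ_apply]

lemma sum_expNegHalfDSqCoeff_mul_two_mul_smul {q : ℝ[X]} {N : ℕ} (hq : q.natDegree ≤ 2 * N) :
    ∑ k ∈ range (N + 1), (expNegHalfDSqCoeff k * (2 * k : ℕ)) • derivative^[2 * k - 1] q =
      -∑ k ∈ range (N + 1), expNegHalfDSqCoeff k • derivative^[2 * k + 1] q := by
  rw [sum_range_succ', sum_range_succ _ N,
    iterate_derivative_eq_zero (show q.natDegree < 2 * N + 1 by omega), smul_zero, add_zero,
    ← sum_neg_distrib]
  simp only [mul_zero, Nat.cast_zero, zero_smul, add_zero, ← neg_smul]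
  refine sum_congr rfl fun k _ => ?_
  rw [mul_comm, Nat.cast_mul, Nat.cast_ofNat, Nat.cast_succ,
    two_mul_succ_mul_expNegHalfDSqCoeff_succ]
  rfl

lemma expNegHalfDSq_X_mul (q : ℝ[X]) :
    expNegHalfDSq (X * q) = X * expNegHalfDSq q - derivative (expNegHalfDSq q) := by
  have hXq : (X * q).natDegree ≤ q.natDegree + 1 :=
    natDegree_mul_le.trans (by have := natDegree_X_le (R := ℝ); omega)
  have hq : q.natDegree ≤ 2 * (q.natDegree + 1) := by omega
  rw [expNegHalfDSq_eq_sum hXq, expNegHalfDSq_eq_sum (Nat.le_succ _), map_sum, mul_sum]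
  simp only [iterate_derivative_X_mul, ← Nat.cast_smul_eq_nsmul ℝ, smul_add, mul_smul_comm,
    sum_add_distrib, smul_smul, sum_expNegHalfDSqCoeff_mul_two_mul_smul hq,
    derivative_smul, ← Function.iterate_succ_apply' derivative]
  abel

/-- `e^{−D²/2}` intertwines the Euler operator `X·D` with the Hermite differential
operator `𝔻_H = X·D − D²`:  `E (X·p') = X·(E p)' − (E p)''`. -/
theorem expNegHalfDSq_intertwines_euler (p : ℝ[X]) :
    expNegHalfDSq (X * derivative p) =
      X * derivative (expNegHalfDSq p) - derivative (derivative (expNegHalfDSq p)) := by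
  rw [expNegHalfDSq_X_mul, derivative_expNegHalfDSq p]
end

section
/- For every polynomial p ∈ ℝ[X], E(X · p) = X · (E p) − (E p)'. Equivalently, conjugation of the multiplication-by-X operator by e^{−D²/2} equals the operator X − D. -/
open Polynomial Finset

private lemma c_succ (k : ℕ) :
    ((-1:ℝ)^(k+1) / (2^(k+1) * ((k+1).factorial : ℝ))) * (2*((k:ℝ)+1)) =
      -((-1:ℝ)^k / (2^k * (k.factorial : ℝ))) := by
  have h1 : ((k.factorial : ℝ)) ≠ 0 := Nat.cast_ne_zero.2 k.factorial_ne_zero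
  have h2 : ((k:ℝ)+1) ≠ 0 := by positivity
  rw [Nat.factorial_succ]
  push_cast
  field_simp
  ring

private lemma iterDeriv_X_mul (p : ℝ[X]) : ∀ n : ℕ,
    (⇑derivative)^[n+1] (X * p) =
      X * (⇑derivative)^[n+1] p + (n+1) • (⇑derivative)^[n] p
  | 0 => by
    simp [derivative_mul]; ring
  | (n+1) => by
    rw [Function.iterate_succ_apply', iterDeriv_X_mul p n, derivative_add, derivative_mul,
      derivative_X, derivative_smul, one_mul,
      ← Function.iterate_succ_apply' derivative n p,
      ← Function.iterate_succ_apply' derivative (n+1) p,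
      succ_nsmul (n := n+1), succ_nsmul (n := n)]
    abel

/-- Conjugation of multiplication-by-X by `e^{−D²/2}` equals `X − D`:
`E (X·p) = X·(E p) − (E p)'`. -/
theorem expNegHalfDSq_mul_X (p : ℝ[X]) :
    expNegHalfDSq (X * p) = X * expNegHalfDSq p - derivative (expNegHalfDSq p) := by
  by_cases hp : p = 0
  · simp [expNegHalfDSq, hp]
  set N := p.natDegree with hN
  set c : ℕ → ℝ := fun k => (-1:ℝ)^k / (2^k * (k.factorial : ℝ)) with hc
  have hdeg : (X * p).natDegree = N + 1 := by
    rw [natDegree_X_mul hp]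
  have hzero : ∀ m : ℕ, N < m → (⇑derivative)^[m] p = 0 := fun m hm =>
    iterate_derivative_eq_zero hm
  have hEp : expNegHalfDSq p = ∑ k ∈ range (N + 1), c k • (⇑derivative)^[2*k] p := rfl
  have hsplit : expNegHalfDSq (X * p)
      = ∑ k ∈ range (N + 2), c k • (X * (⇑derivative)^[2*k] p)
        + ∑ k ∈ range (N + 2), c k • ((2*k) • (⇑derivative)^[2*k-1] p) := by
    rw [expNegHalfDSq, hdeg, ← sum_add_distrib]
    refine sum_congr rfl fun k hk => ?_
    cases k with
    | zero => norm_num [hc]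
    | succ j =>
      have e2 : 2 * (j+1) - 1 = 2*j+1 := by omega
      have e1 : 2 * (j+1) = (2*j+1)+1 := by ring
      rw [e2, e1, iterDeriv_X_mul, smul_add]
  rw [hsplit]
  have h1 : ∑ k ∈ range (N + 2), c k • (X * (⇑derivative)^[2*k] p)
      = X * expNegHalfDSq p := by
    rw [hEp, mul_sum, sum_range_succ]
    rw [hzero (2*(N+1)) (by omega)]
    simp [mul_smul_comm]
  have h2 : ∑ k ∈ range (N + 2), c k • ((2*k) • (⇑derivative)^[2*k-1] p)
      = - derivative (expNegHalfDSq p) := by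
    rw [hEp, derivative_sum]
    rw [sum_range_succ']
    simp only [Nat.mul_zero, zero_smul, smul_zero, add_zero]
    rw [← Finset.sum_neg_distrib]
    refine sum_congr rfl fun j hj => ?_
    rw [derivative_smul,
      show derivative ((⇑derivative)^[2*j] p) = (⇑derivative)^[2*j+1] p from
        (Function.iterate_succ_apply' _ _ _).symm]
    have e2 : 2 * (j+1) - 1 = 2*j+1 := by omega
    rw [e2, ← Nat.cast_smul_eq_nsmul ℝ (2*(j+1)), smul_smul, ← neg_smul]
    congr 1
    have := c_succ j
    push_cast
    linarith [this]
  rw [h1, h2]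
  ring
end
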